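/- Define continued fractions by $[c_k] = c_k$ and $[c_1,\ldots,c_k] = c_1 - 1/[c_2,\ldots,c_k]$ (when defined). Let $\rho_0,\ldots,\rho_l$ be the cyclically ordered rays of a smooth complete fan in $\mathbb{Z}^2$ with self-intersection data $b_i$ (so $b_i\rho_i = \rho_{i-1}+\rho_{i+1}$), $b_0 < 0$, $l > 2$, and let $\alpha$ be the unique index with $1 < \alpha < l$ and $\rho_\alpha = -\rho_0$. Then $[b_1, b_2, \ldots, b_{\alpha-1}]$ is well-defined and equals $0$. -/

import Mathlib

/-- The determinant of two vectors in `ℤ²`. -/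
def det2 (v w : ℤ × ℤ) : ℤ := v.1 * w.2 - v.2 * w.1

/-- The combinatorial data of a smooth complete toric surface: primitive ray generators
`ρ 0, …, ρ l` in counterclockwise cyclic order (each consecutive pair is a positively
oriented basis of `ℤ²`), self-intersection data `b` with `b i • ρ i = ρ (i-1) + ρ (i+1)`,
the cones covering the plane, and distinct cones having disjoint interiors. -/
structure SmoothCompleteFan (l : ℕ) where
  ρ : ZMod (l + 1) → ℤ × ℤ
  b : ZMod (l + 1) → ℤ
  inj : Function.Injective ρ
  smooth_ccw : ∀ i, det2 (ρ i) (ρ (i + 1)) = 1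
  rel : ∀ i, b i • ρ i = ρ (i - 1) + ρ (i + 1)
  complete : ∀ v : ℤ × ℤ, ∃ (i : ZMod (l + 1)) (a c : ℕ),
      v = (a : ℤ) • ρ i + (c : ℤ) • ρ (i + 1)
  proper : ∀ i j : ZMod (l + 1), i ≠ j → ∀ v : ℤ × ℤ,
      ¬ ((∃ a c : ℕ, 0 < a ∧ 0 < c ∧ v = (a : ℤ) • ρ i + (c : ℤ) • ρ (i + 1)) ∧
         (∃ a c : ℕ, 0 < a ∧ 0 < c ∧ v = (a : ℤ) • ρ j + (c : ℤ) • ρ (j + 1)))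

/-- The continued fraction `[c₁,…,c_k] = c₁ - 1/[c₂,…,c_k]`, returning `none` when a
division by zero occurs (i.e. when it is not well defined). -/
def cfVal : List ℚ → Option ℚ
  | [] => none
  | [c] => some c
  | c :: rest =>
    match cfVal rest with
    | none => none
    | some q => if q = 0 then none else some (c - 1 / q)

/-!
Put `D i = det2 (ρ i) (ρ α)`. Taking `det2 (·, ρ α)` of the relations gives the three-term
recurrence `b i * D i = D (i-1) + D (i+1)`, with boundary values `D 0 = D α = 0`, and
`D i ≠ 0` for `0 < i < α` since a ray parallel to `ρ α` would equal `ρ α` or `ρ 0 = -ρ α`.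
Reading the recurrence as `D (i-1) / D i = b i - 1 / (D i / D (i+1))` and unwinding it from
`i = α - 1` down to `i = 1` shows `[b 1, …, b (α-1)] = D 0 / D 1 = 0`.
-/

lemma cfVal_cons_of_ne_zero (c q : ℚ) (L : List ℚ) (hL : cfVal L = some q) (hq : q ≠ 0) :
    cfVal (c :: L) = some (c - 1 / q) := by
  match L with
  | [] => simp [cfVal] at hL
  | d :: rest => simp [cfVal, hL, hq]

lemma cfVal_eq_div_of_recurrence (k : ℕ) (hk : 0 < k) (b D : ℕ → ℚ)
    (hrec : ∀ j < k, b (j + 1) * D (j + 1) = D j + D (j + 2))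
    (hD : ∀ j < k, D (j + 1) ≠ 0) (hend : D (k + 1) = 0) :
    cfVal ((List.range k).map fun j => b (j + 1)) = some (D 0 / D 1) := by
  induction k generalizing b D with
  | zero => omega
  | succ k ih =>
    have h0 := hrec 0 k.succ_pos
    have hD1 := hD 0 k.succ_pos
    rw [List.range_succ_eq_map, List.map_cons, List.map_map]
    rcases Nat.eq_zero_or_pos k with rfl | hk
    · rw [zero_add] at hend
      simp only [List.range_zero, List.map_nil, cfVal]
      rw [hend, add_zero] at h0
      congr 1
      field_simp
      linear_combination h0
    · have hrest := ih hk (fun j => b (j + 1)) (fun j => D (j + 1))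
        (fun j hj => hrec (j + 1) (by omega)) (fun j hj => hD (j + 1) (by omega)) hend
      have hD2 : D 2 ≠ 0 := hD 1 (by omega)
      have hcomp : ((fun j => b (j + 1)) ∘ Nat.succ) = fun j => b (j + 1 + 1) := rfl
      rw [hcomp, cfVal_cons_of_ne_zero _ _ _ hrest (div_ne_zero hD1 hD2)]
      congr 1
      field_simp
      linear_combination h0

lemma det2_smul_left (c : ℤ) (v w : ℤ × ℤ) : det2 (c • v) w = c * det2 v w := by
  simp only [det2, Prod.smul_fst, Prod.smul_snd, smul_eq_mul]
  ring

lemma exists_eq_smul_of_det2_eq_zero {v w : ℤ × ℤ} (u : ℤ × ℤ) (hvu : det2 v u = 1)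
    (hvw : det2 v w = 0) : ∃ c : ℤ, w = c • v := by
  refine ⟨w.1 * u.2 - w.2 * u.1, ?_⟩
  simp only [det2] at hvu hvw
  ext
  · simp only [Prod.smul_fst, smul_eq_mul]
    linear_combination -w.1 * hvu + u.1 * hvw
  · simp only [Prod.smul_snd, smul_eq_mul]
    linear_combination -w.2 * hvu + u.2 * hvw

namespace SmoothCompleteFan

variable {l : ℕ} (F : SmoothCompleteFan l)

lemma b_mul_det2 (i : ZMod (l + 1)) (w : ℤ × ℤ) :
    F.b i * det2 (F.ρ i) w = det2 (F.ρ (i - 1)) w + det2 (F.ρ (i + 1)) w := by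
  have h := F.rel i
  have h1 := congrArg Prod.fst h
  have h2 := congrArg Prod.snd h
  simp only [Prod.smul_fst, Prod.smul_snd, Prod.fst_add, Prod.snd_add, smul_eq_mul] at h1 h2
  simp only [det2]
  linear_combination w.2 * h1 - w.1 * h2

lemma eq_or_eq_neg_of_det2_eq_zero {i j : ZMod (l + 1)} (h : det2 (F.ρ i) (F.ρ j) = 0) :
    F.ρ j = F.ρ i ∨ F.ρ j = -F.ρ i := by
  obtain ⟨c, hc⟩ := exists_eq_smul_of_det2_eq_zero _ (F.smooth_ccw i) h
  have hunit : c * det2 (F.ρ i) (F.ρ (j + 1)) = 1 := by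
    rw [← det2_smul_left, ← hc, F.smooth_ccw]
  rcases Int.isUnit_iff.mp (IsUnit.of_mul_eq_one _ hunit) with rfl | rfl
  · exact Or.inl (by rw [hc, one_smul])
  · exact Or.inr (by rw [hc, neg_one_smul])

lemma eq_of_ρ_natCast_eq {i j : ℕ} (hi : i < l + 1) (hj : j < l + 1)
    (h : F.ρ (i : ZMod (l + 1)) = F.ρ j) : i = j := by
  have hv := congrArg ZMod.val (F.inj h)
  rwa [ZMod.val_cast_of_lt hi, ZMod.val_cast_of_lt hj] at hv

end SmoothCompleteFan

theorem cf_of_opposite_ray_general (l : ℕ) (F : SmoothCompleteFan l)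
    (α : ℕ) (hα1 : 1 < α) (hαl : α < l)
    (hopp : F.ρ (α : ZMod (l + 1)) = - F.ρ 0) :
    cfVal ((List.range (α - 1)).map
      (fun j => ((F.b (((j + 1 : ℕ) : ZMod (l + 1))) : ℤ) : ℚ))) = some 0 := by
  set D : ℕ → ℚ := fun i => det2 (F.ρ (i : ZMod (l + 1))) (F.ρ α)
  have hrec (j : ℕ) :
      (F.b ((j + 1 : ℕ) : ZMod (l + 1)) : ℚ) * D (j + 1) = D j + D (j + 2) := by
    have h := F.b_mul_det2 ((j + 1 : ℕ) : ZMod (l + 1)) (F.ρ α)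
    simp only [D]
    push_cast at h ⊢
    rw [add_sub_cancel_right, add_assoc, one_add_one_eq_two] at h
    exact_mod_cast h
  have hD (j : ℕ) (hj : j < α - 1) : D (j + 1) ≠ 0 := by
    simp only [D, ne_eq, Int.cast_eq_zero]
    intro h0
    rcases F.eq_or_eq_neg_of_det2_eq_zero h0 with h | h
    · exact absurd (F.eq_of_ρ_natCast_eq (by omega) (by omega) h) (by omega)
    · rw [hopp, neg_inj] at h
      have h0 : F.ρ ((0 : ℕ) : ZMod (l + 1)) = F.ρ ((j + 1 : ℕ) : ZMod (l + 1)) := by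
        simpa using h
      exact absurd (F.eq_of_ρ_natCast_eq (by omega) (by omega) h0) (by omega)
  have hD0 : D 0 = 0 := by
    simp only [D, Nat.cast_zero, hopp, det2, Prod.fst_neg, Prod.snd_neg]
    push_cast
    ring
  have hDα : D (α - 1 + 1) = 0 := by
    simp only [D, Nat.sub_add_cancel hα1.le, det2]
    push_cast
    ring
  rw [cfVal_eq_div_of_recurrence (α - 1) (by omega) (fun i => (F.b i : ℚ)) D
    (fun j _ => hrec j) hD hDα, hD0, zero_div]

/-- If `b 0 < 0`, `l > 2` and `α` is the index with `1 < α < l` and `ρ α = -ρ 0`, then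
the continued fraction `[b 1, …, b (α-1)]` is well defined and equals `0`. -/
theorem cf_of_opposite_ray (l : ℕ) (hl : 2 < l) (F : SmoothCompleteFan l)
    (hb0 : F.b 0 < 0) (α : ℕ) (hα1 : 1 < α) (hαl : α < l)
    (hopp : F.ρ (α : ZMod (l + 1)) = - F.ρ 0) :
    cfVal ((List.range (α - 1)).map
      (fun j => ((F.b (((j + 1 : ℕ) : ZMod (l + 1))) : ℤ) : ℚ))) = some 0 :=
  cf_of_opposite_ray_general l F α hα1 hαl hopp
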